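/- Reduction from three machines with unit first-machine processing times to two machines: let I be a two-machine JIT flow-shop instance with n jobs, where job j has processing times p^(1)_j, p^(2)_j, weight w_j, and due date d_j. Define the three-machine instance Ī on the same n jobs by p̄^(1)_j = 1, p̄^(2)_j = p^(1)_j, p̄^(3)_j = p^(2)_j, w̄_j = w_j, and d̄_j = d_j + 1. Then a set of jobs E is feasible for the three-machine instance Ī if and only if E is feasible for the two-machine instance I. -/

import Mathlib

open Finset

/-- A just-in-time flow-shop instance on `m` machines with jobs of type `J`:
`p i j` is the (positive integer) processing time of job `j` on machine `i`,
`d j` its positive integer due date and `w j` its positive integer weight. -/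
structure JITInstance (m : ℕ) (J : Type) where
  p : Fin m → J → ℕ
  d : J → ℕ
  w : J → ℕ
  p_pos : ∀ i j, 0 < p i j
  d_pos : ∀ j, 0 < d j
  w_pos : ∀ j, 0 < w j

/-- `S` is a JIT schedule of the job set `E`: on every machine the processing
intervals `(S i j, S i j + p i j]` of distinct jobs of `E` are pairwise disjoint,
each job's operation on machine `i+1` starts no earlier than its completion on
machine `i`, and every job of `E` completes on the last machine exactly at its
due date.  (Start times are nonnegative automatically, being naturals.) -/
def IsJITSchedule {m : ℕ} {J : Type} (I : JITInstance m J)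
    (E : Finset J) (S : Fin m → J → ℕ) : Prop :=
  (∀ i : Fin m, ∀ j ∈ E, ∀ j' ∈ E, j ≠ j' →
      S i j + I.p i j ≤ S i j' ∨ S i j' + I.p i j' ≤ S i j) ∧
  (∀ j ∈ E, ∀ i i' : Fin m, i'.val = i.val + 1 →
      S i j + I.p i j ≤ S i' j) ∧
  (∀ j ∈ E, ∀ i : Fin m, i.val = m - 1 →
      S i j + I.p i j = I.d j)

/-- A job set is feasible if it admits a JIT schedule. -/
def Feasible {m : ℕ} {J : Type} (I : JITInstance m J) (E : Finset J) : Prop :=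
  ∃ S : Fin m → J → ℕ, IsJITSchedule I E S

/-- The three-machine instance `Ī` obtained from a two-machine instance `I`:
`p̄¹ = 1`, `p̄² = p¹`, `p̄³ = p²`, `w̄ = w`, `d̄ = d + 1`. -/
def liftToThreeMachines {J : Type} (I : JITInstance 2 J) : JITInstance 3 J where
  p := fun i j =>
    if i.val = 0 then 1 else if i.val = 1 then I.p 0 j else I.p 1 j
  d := fun j => I.d j + 1
  w := I.w
  p_pos := by
    intro i j
    try dsimp only
    split
    · exact one_pos
    · split
      · exact I.p_pos 0 j
      · exact I.p_pos 1 j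
  d_pos := fun j => Nat.succ_pos (I.d j)
  w_pos := I.w_pos

/-!
A two-machine schedule lifts by delaying it one time unit and running each job's unit operation
in the first slot of its original first-machine interval; these unit slots cannot overlap since
all processing times are at least one. Conversely, dropping the unit machine and advancing the
schedule by one unit is harmless, because every later operation starts at time at least one.
-/

def NoOverlap {J : Type} (E : Finset J) (s p : J → ℕ) : Prop :=
  (E : Set J).Pairwise fun j j' => s j + p j ≤ s j' ∨ s j' + p j' ≤ s j

namespace NoOverlap

variable {J : Type} {E : Finset J} {s p q : J → ℕ}

theorem mono (h : NoOverlap E s p) (hqp : ∀ j, q j ≤ p j) : NoOverlap E s q :=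
  fun j hj j' hj' hne => (h hj hj' hne).imp (Nat.add_le_add_left (hqp j) _).trans
    (Nat.add_le_add_left (hqp j') _).trans

theorem add_const (h : NoOverlap E s p) (c : ℕ) :
    NoOverlap E (fun j => s j + c) p := fun j hj j' hj' hne => by
  dsimp only
  exact (h hj hj' hne).imp (by omega) (by omega)

theorem sub_const (h : NoOverlap E s p) {c : ℕ} (hc : ∀ j ∈ E, c ≤ s j) :
    NoOverlap E (fun j => s j - c) p := fun j hj j' hj' hne => by
  have := hc j hj
  have := hc j' hj'
  have := h hj hj' hne
  dsimp only
  omega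

end NoOverlap

section

variable {J : Type} (I : JITInstance 2 J) (E : Finset J)

theorem isJITSchedule_two_iff (S : Fin 2 → J → ℕ) :
    IsJITSchedule I E S ↔
      NoOverlap E (S 0) (I.p 0) ∧ NoOverlap E (S 1) (I.p 1) ∧
      ∀ j ∈ E, S 0 j + I.p 0 j ≤ S 1 j ∧ S 1 j + I.p 1 j = I.d j := by
  constructor
  · rintro ⟨hdisj, hchain, hdue⟩
    exact ⟨hdisj 0, hdisj 1, fun j hj => ⟨hchain j hj 0 1 rfl, hdue j hj 1 rfl⟩⟩
  · rintro ⟨h₀, h₁, hjob⟩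
    refine ⟨fun i => ?_, fun j hj i i' hii => ?_, fun j hj i hi => ?_⟩
    · fin_cases i
      exacts [h₀, h₁]
    · fin_cases i <;> fin_cases i' <;> first | exact (hjob j hj).1 | simp at hii
    · fin_cases i <;> first | exact (hjob j hj).2 | simp at hi

theorem isJITSchedule_liftToThreeMachines_iff (S : Fin 3 → J → ℕ) :
    IsJITSchedule (liftToThreeMachines I) E S ↔
      NoOverlap E (S 0) 1 ∧ NoOverlap E (S 1) (I.p 0) ∧ NoOverlap E (S 2) (I.p 1) ∧
      ∀ j ∈ E, S 0 j + 1 ≤ S 1 j ∧ S 1 j + I.p 0 j ≤ S 2 j ∧ S 2 j + I.p 1 j = I.d j + 1 := by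
  constructor
  · rintro ⟨hdisj, hchain, hdue⟩
    exact ⟨hdisj 0, hdisj 1, hdisj 2, fun j hj =>
      ⟨hchain j hj 0 1 rfl, hchain j hj 1 2 rfl, hdue j hj 2 rfl⟩⟩
  · rintro ⟨h₀, h₁, h₂, hjob⟩
    refine ⟨fun i => ?_, fun j hj i i' hii => ?_, fun j hj i hi => ?_⟩
    · fin_cases i
      exacts [h₀, h₁, h₂]
    · fin_cases i <;> fin_cases i' <;>
        first | exact (hjob j hj).1 | exact (hjob j hj).2.1 | simp at hii
    · fin_cases i <;> first | exact (hjob j hj).2.2 | simp at hi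

end

/-- reduction from three machines with unit first-machine
processing times to two machines.  A job set `E` is feasible for the
three-machine instance `Ī` iff it is feasible for the two-machine instance `I`. -/
theorem jit_three_machines_unit_first_iff_two_machines {J : Type}
    (I : JITInstance 2 J) (E : Finset J) :
    Feasible (liftToThreeMachines I) E ↔ Feasible I E := by
  simp only [Feasible, isJITSchedule_two_iff, isJITSchedule_liftToThreeMachines_iff]
  constructor
  · rintro ⟨S, -, h₁, h₂, hchain⟩
    have hpos : ∀ j ∈ E, 1 ≤ S 1 j ∧ 1 ≤ S 2 j := fun j hj => by
      have := hchain j hj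
      omega
    refine ⟨![fun j => S 1 j - 1, fun j => S 2 j - 1], h₁.sub_const fun j hj => (hpos j hj).1,
      h₂.sub_const fun j hj => (hpos j hj).2, fun j hj => ?_⟩
    have := hchain j hj
    simp only [Matrix.cons_val_zero, Matrix.cons_val_one]
    omega
  · rintro ⟨S, h₀, h₁, hchain⟩
    refine ⟨![S 0, fun j => S 0 j + 1, fun j => S 1 j + 1], h₀.mono fun j => I.p_pos 0 j,
      h₀.add_const 1, h₁.add_const 1, fun j hj => ?_⟩
    have := hchain j hj
    simp only [Matrix.cons_val]
    omega
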